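/- For each dimension p ≥ 1 there exists a finite constant κ_p depending only on p with the following property. Let Y_1, …, Y_n be i.i.d. copies of a random vector Y ∈ ℝ^p with mean μ = EY and E‖Y‖² < ∞, let Ȳ be the sample mean, and let Ω̆ = ( (1/n) Σ_{i=1}^n ((Y_i − Ȳ)(Y_i − Ȳ)ᵀ)^{1/2} )² be the sample d_S-covariance. Then E[ d_S(Ω̆, cov_{d_S}(Y)) ] ≤ κ_p √( E‖Y − μ‖² / n ). -/

import Mathlib

open Matrix MeasureTheory ProbabilityTheory

noncomputable def eunorm {p : ℕ} (x : Fin p → ℝ) : ℝ := Real.sqrt (∑ i, x i ^ 2)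

noncomputable def frob {p : ℕ} (M : Matrix (Fin p) (Fin p) ℝ) : ℝ :=
  Real.sqrt (∑ i, ∑ j, M i j ^ 2)

open Classical in
noncomputable def msqrt {p : ℕ} (A : Matrix (Fin p) (Fin p) ℝ) : Matrix (Fin p) (Fin p) ℝ :=
  if h : A.PosSemidef then
    (h.1.eigenvectorUnitary : Matrix (Fin p) (Fin p) ℝ) *
      diagonal ((RCLike.ofReal : ℝ → ℝ) ∘ Real.sqrt ∘ h.1.eigenvalues) *
      (star h.1.eigenvectorUnitary : Matrix (Fin p) (Fin p) ℝ)
  else 0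

noncomputable def dS {p : ℕ} (A B : Matrix (Fin p) (Fin p) ℝ) : ℝ := frob (msqrt A - msqrt B)

noncomputable def mExp {p : ℕ} {Ωs : Type*} [MeasurableSpace Ωs] (μ : Measure Ωs)
    (F : Ωs → Matrix (Fin p) (Fin p) ℝ) : Matrix (Fin p) (Fin p) ℝ :=
  Matrix.of fun i j => ∫ ω, F ω i j ∂μ

noncomputable def covDS {p : ℕ} {Ωs : Type*} [MeasurableSpace Ωs] (μ : Measure Ωs)
    (Y : Ωs → Fin p → ℝ) : Matrix (Fin p) (Fin p) ℝ :=
  (mExp μ fun ω => msqrt (vecMulVec (Y ω - fun r => ∫ ω', Y ω' r ∂μ) (Y ω - fun r => ∫ ω', Y ω' r ∂μ))) *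
  (mExp μ fun ω => msqrt (vecMulVec (Y ω - fun r => ∫ ω', Y ω' r ∂μ) (Y ω - fun r => ∫ ω', Y ω' r ∂μ)))

/-!
For `v : ℝᵖ` the root `(v vᵀ)^{1/2}` is `v vᵀ / ‖v‖`, which has Frobenius norm `‖v‖` and is a
`3`-Lipschitz function of `v`. Both `Ω̆` and `cov_{d_S}(Y)` are squares of positive semidefinite
matrices, namely `Â = (1/n) ∑ ((Yᵢ - Ȳ)(Yᵢ - Ȳ)ᵀ)^{1/2}` and `N = E[((Y - μ)(Y - μ)ᵀ)^{1/2}]`, so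
their `d_S`-distance is `‖Â - N‖_F`. Replacing `Ȳ` by `μ` in `Â` costs at most `3 ‖Ȳ - μ‖`, and
what is left are two deviations of i.i.d. sample means from their expectations: of the `Yᵢ` and of
the roots `((Yᵢ - μ)(Yᵢ - μ)ᵀ)^{1/2}`. Since variances of independent summands add, both have
expected norm at most `√(E‖Y - μ‖² / n)`, so `κ_p = 4` works.
-/

section Norms

variable {p : ℕ}

lemma eunorm_eq_norm (x : Fin p → ℝ) : eunorm x = ‖WithLp.toLp 2 x‖ := by
  simp [eunorm, EuclideanSpace.norm_eq]

lemma frob_eq_norm (M : Matrix (Fin p) (Fin p) ℝ) : frob M = ‖WithLp.toLp 2 M.vec‖ := by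
  simp [frob, EuclideanSpace.norm_eq, Fintype.sum_prod_type, vec_eq_uncurry]
  rw [Finset.sum_comm]

lemma eunorm_nonneg (x : Fin p → ℝ) : 0 ≤ eunorm x := Real.sqrt_nonneg _

lemma frob_sub_le_add (A B C : Matrix (Fin p) (Fin p) ℝ) :
    frob (A - C) ≤ frob (A - B) + frob (B - C) := by
  simp only [frob_eq_norm, vec_sub, WithLp.toLp_sub]
  exact norm_sub_le_norm_sub_add_norm_sub _ _ _

lemma eunorm_sub_comm (x y : Fin p → ℝ) : eunorm (x - y) = eunorm (y - x) := by
  simp only [eunorm_eq_norm, WithLp.toLp_sub, norm_sub_rev]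

lemma frob_sub_comm (A B : Matrix (Fin p) (Fin p) ℝ) : frob (A - B) = frob (B - A) := by
  simp only [frob_eq_norm, vec_sub, WithLp.toLp_sub, norm_sub_rev]

lemma frob_add_le (A B : Matrix (Fin p) (Fin p) ℝ) : frob (A + B) ≤ frob A + frob B := by
  simp only [frob_eq_norm, vec_add, WithLp.toLp_add]
  exact norm_add_le _ _

lemma frob_smul (c : ℝ) (M : Matrix (Fin p) (Fin p) ℝ) : frob (c • M) = |c| * frob M := by
  simp only [frob_eq_norm, vec_smul, WithLp.toLp_smul, norm_smul, Real.norm_eq_abs]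

lemma frob_sum_le {ι : Type*} (s : Finset ι) (M : ι → Matrix (Fin p) (Fin p) ℝ) :
    frob (∑ i ∈ s, M i) ≤ ∑ i ∈ s, frob (M i) := by
  simp only [frob_eq_norm, vec_sum, WithLp.toLp_sum]
  exact norm_sum_le _ _

lemma frob_vecMulVec (u v : Fin p → ℝ) : frob (vecMulVec u v) = eunorm u * eunorm v := by
  rw [frob, eunorm, eunorm, ← Real.sqrt_mul (Finset.sum_nonneg fun i _ => sq_nonneg _),
    Finset.sum_mul_sum]
  simp only [vecMulVec_apply, mul_pow]

end Norms

section SquareRoots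

variable {p : ℕ}

open scoped MatrixOrder in
lemma msqrt_eq_of_mul_self_eq {A B : Matrix (Fin p) (Fin p) ℝ} (hA : A.PosSemidef)
    (hB : B.PosSemidef) (h : B * B = A) : msqrt A = B := by
  rw [msqrt, dif_pos hA]
  have hcfc := Matrix.IsHermitian.cfc_eq hA.1 Real.sqrt
  rw [Matrix.IsHermitian.cfc, Unitary.conjStarAlgAut_apply] at hcfc
  rw [← hcfc, ← cfcₙ_eq_cfc, ← CFC.sqrt_eq_real_sqrt A hA.nonneg]
  exact CFC.sqrt_unique h hB.nonneg

lemma msqrt_mul_self {M : Matrix (Fin p) (Fin p) ℝ} (hM : M.PosSemidef) : msqrt (M * M) = M :=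
  msqrt_eq_of_mul_self_eq (by simpa [sq] using hM.pow 2) hM rfl

lemma posSemidef_vecMulVec_self (v : Fin p → ℝ) : (vecMulVec v v).PosSemidef := by
  simpa using posSemidef_vecMulVec_self_star v

lemma dotProduct_self_eq_eunorm_sq (v : Fin p → ℝ) : v ⬝ᵥ v = eunorm v ^ 2 := by
  rw [eunorm, Real.sq_sqrt (Finset.sum_nonneg fun i _ => sq_nonneg _)]
  simp [dotProduct, sq]

lemma msqrt_vecMulVec_self (v : Fin p → ℝ) :
    msqrt (vecMulVec v v) = (eunorm v)⁻¹ • vecMulVec v v := by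
  refine msqrt_eq_of_mul_self_eq (posSemidef_vecMulVec_self v)
    ((posSemidef_vecMulVec_self v).smul (inv_nonneg.mpr (eunorm_nonneg v))) ?_
  rw [smul_mul_smul_comm, vecMulVec_mul_vecMulVec, vecMulVec_smul,
    dotProduct_self_eq_eunorm_sq, smul_smul]
  rcases eq_or_ne (eunorm v) 0 with hv | hv
  · have : v = 0 := by simpa [dotProduct_self_eq_eunorm_sq, hv] using dotProduct_self_eq_zero (v := v)
    simp [this]
  · field_simp
    simp

end SquareRoots

section RankOneSqrt

variable {p : ℕ}

lemma posSemidef_msqrt_vecMulVec_self (v : Fin p → ℝ) : (msqrt (vecMulVec v v)).PosSemidef := by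
  rw [msqrt_vecMulVec_self]
  exact (posSemidef_vecMulVec_self v).smul (inv_nonneg.mpr (eunorm_nonneg v))

lemma frob_msqrt_vecMulVec_self (v : Fin p → ℝ) : frob (msqrt (vecMulVec v v)) = eunorm v := by
  rw [msqrt_vecMulVec_self, frob_smul, frob_vecMulVec, abs_inv, abs_of_nonneg (eunorm_nonneg v)]
  rcases eq_or_ne (eunorm v) 0 with hv | hv
  · simp [hv]
  · field_simp

lemma abs_apply_le_frob (M : Matrix (Fin p) (Fin p) ℝ) (i j : Fin p) : |M i j| ≤ frob M := by
  rw [frob_eq_norm, ← Real.norm_eq_abs]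
  exact PiLp.norm_apply_le (WithLp.toLp 2 M.vec) (j, i)

lemma measurable_eunorm : Measurable (eunorm : (Fin p → ℝ) → ℝ) := by
  unfold eunorm; fun_prop

lemma measurable_msqrt_vecMulVec_self_apply (i j : Fin p) :
    Measurable fun v : Fin p → ℝ => msqrt (vecMulVec v v) i j := by
  have hE := measurable_eunorm (p := p)
  simp only [msqrt_vecMulVec_self, Matrix.smul_apply, vecMulVec_apply, smul_eq_mul]
  fun_prop

lemma frob_inv_smul_vecMulVec_sub_le {u v : Fin p → ℝ} (hvu : eunorm v ≤ eunorm u) :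
    frob ((eunorm u)⁻¹ • vecMulVec u u - (eunorm v)⁻¹ • vecMulVec v v) ≤ 3 * eunorm (u - v) := by
  set a := eunorm u
  set b := eunorm v
  set d := eunorm (u - v)
  have hb : 0 ≤ b := eunorm_nonneg v
  have hd : 0 ≤ d := eunorm_nonneg _
  rcases (hb.trans hvu).eq_or_lt with ha | ha
  · have hb0 : b = 0 := le_antisymm (ha ▸ hvu) hb
    simp [← ha, hb0, frob, hd]
  have hab : a - b ≤ d := by
    simp only [a, b, d, eunorm_eq_norm, WithLp.toLp_sub]
    exact norm_sub_norm_le _ _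
  have hsplit : a⁻¹ • vecMulVec u u - b⁻¹ • vecMulVec v v
      = a⁻¹ • (vecMulVec u (u - v) + vecMulVec (u - v) v) + (a⁻¹ - b⁻¹) • vecMulVec v v := by
    ext i j
    simp only [Matrix.sub_apply, Matrix.add_apply, Matrix.smul_apply, vecMulVec_apply,
      smul_eq_mul, Pi.sub_apply]
    ring
  have hcross : frob (a⁻¹ • (vecMulVec u (u - v) + vecMulVec (u - v) v)) ≤ 2 * d := by
    rw [frob_smul, abs_of_pos (inv_pos.mpr ha), inv_mul_le_iff₀ ha]
    calc frob (vecMulVec u (u - v) + vecMulVec (u - v) v)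
        ≤ a * d + d * b := by
          simpa only [frob_vecMulVec] using frob_add_le (vecMulVec u (u - v)) (vecMulVec (u - v) v)
      _ ≤ a * (2 * d) := by nlinarith
  have hradial : frob ((a⁻¹ - b⁻¹) • vecMulVec v v) ≤ d := by
    rw [frob_smul, frob_vecMulVec]
    change |a⁻¹ - b⁻¹| * (b * b) ≤ d
    rcases hb.eq_or_lt with hb0 | hb0
    · simpa [← hb0] using hd
    calc |a⁻¹ - b⁻¹| * (b * b) = (a - b) * b / a := by
          rw [abs_sub_comm, abs_of_nonneg (sub_nonneg.mpr (inv_anti₀ hb0 hvu))]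
          field_simp
      _ ≤ a - b := by rw [div_le_iff₀ ha]; nlinarith
      _ ≤ d := hab
  calc _ = frob (a⁻¹ • (vecMulVec u (u - v) + vecMulVec (u - v) v)
          + (a⁻¹ - b⁻¹) • vecMulVec v v) := by rw [hsplit]
    _ ≤ 2 * d + d := (frob_add_le _ _).trans (add_le_add hcross hradial)
    _ = 3 * d := by ring

lemma frob_msqrt_vecMulVec_self_sub_le (u v : Fin p → ℝ) :
    frob (msqrt (vecMulVec u u) - msqrt (vecMulVec v v)) ≤ 3 * eunorm (u - v) := by
  simp only [msqrt_vecMulVec_self]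
  rcases le_total (eunorm v) (eunorm u) with h | h
  · exact frob_inv_smul_vecMulVec_sub_le h
  · rw [frob_sub_comm, eunorm_sub_comm]
    exact frob_inv_smul_vecMulVec_sub_le h

lemma frob_smul_sum_msqrt_sub_le {n : ℕ} (y : Fin n → Fin p → ℝ) (a b : Fin p → ℝ) :
    frob ((n : ℝ)⁻¹ • ∑ i, msqrt (vecMulVec (y i - a) (y i - a))
      - (n : ℝ)⁻¹ • ∑ i, msqrt (vecMulVec (y i - b) (y i - b))) ≤ 3 * eunorm (a - b) := by
  have hterm : ∀ i, frob (msqrt (vecMulVec (y i - a) (y i - a))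
      - msqrt (vecMulVec (y i - b) (y i - b))) ≤ 3 * eunorm (a - b) := fun i => by
    simpa [eunorm_sub_comm a] using frob_msqrt_vecMulVec_self_sub_le (y i - a) (y i - b)
  rw [← smul_sub, ← Finset.sum_sub_distrib, frob_smul, abs_of_nonneg (by positivity)]
  calc (n : ℝ)⁻¹ * frob (∑ i, (msqrt (vecMulVec (y i - a) (y i - a))
        - msqrt (vecMulVec (y i - b) (y i - b))))
      ≤ (n : ℝ)⁻¹ * (n * (3 * eunorm (a - b))) := by
        gcongr
        refine (frob_sum_le _ _).trans ?_
        simpa using Finset.sum_le_sum fun i (_ : i ∈ Finset.univ) => hterm i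
    _ ≤ 3 * eunorm (a - b) := by
        rw [← mul_assoc]
        exact mul_le_of_le_one_left (mul_nonneg zero_le_three (eunorm_nonneg _))
          (inv_mul_le_one_of_le₀ le_rfl (Nat.cast_nonneg n))

end RankOneSqrt

section SampleMean

variable {Ω : Type*} [MeasurableSpace Ω] {μ : Measure Ω} [IsProbabilityMeasure μ]

lemma integral_le_sqrt_integral_sq {f : Ω → ℝ} (hf : MemLp f 2 μ) :
    ∫ ω, f ω ∂μ ≤ √(∫ ω, f ω ^ 2 ∂μ) := by
  apply Real.le_sqrt_of_sq_le
  have := variance_nonneg f μ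
  rw [variance_eq_sub hf] at this
  simpa using this

lemma integral_sq_smul_sum_sub {n : ℕ} {X : Fin n → Ω → ℝ} (i₀ : Fin n)
    (hX : ∀ i, MemLp (X i) 2 μ) (hind : Pairwise fun i j => IndepFun (X i) (X j) μ)
    (hid : ∀ i, IdentDistrib (X i) (X i₀) μ μ) {m : ℝ} (hm : ∫ ω, X i₀ ω ∂μ = m) :
    ∫ ω, ((n : ℝ)⁻¹ * ∑ i, X i ω - m) ^ 2 ∂μ = Var[X i₀; μ] / n := by
  have hn : (n : ℝ) ≠ 0 := Nat.cast_ne_zero.mpr (Fin.pos i₀).ne'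
  have hmean : ∫ ω, (n : ℝ)⁻¹ * ∑ i, X i ω ∂μ = m := by
    rw [integral_const_mul, integral_finsetSum _ fun i _ => (hX i).integrable one_le_two]
    simp only [(hid _).integral_eq, hm, Finset.sum_const, Finset.card_univ, Fintype.card_fin,
      nsmul_eq_mul]
    field_simp
  have hsum : (fun ω => ∑ i, X i ω) = ∑ i, X i := by ext; simp
  calc ∫ ω, ((n : ℝ)⁻¹ * ∑ i, X i ω - m) ^ 2 ∂μ
      = Var[fun ω => (n : ℝ)⁻¹ * ∑ i, X i ω; μ] := by
        have hXm := fun i => (hX i).aemeasurable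
        rw [variance_eq_integral (by fun_prop), hmean]
    _ = (n : ℝ)⁻¹ ^ 2 * ∑ i, Var[X i; μ] := by
        rw [variance_const_mul, hsum,
          IndepFun.variance_sum (fun i _ => hX i) fun i _ j _ hij => hind hij]
    _ = Var[X i₀; μ] / n := by
        simp only [(hid _).variance_eq, Finset.sum_const, Finset.card_univ, Fintype.card_fin,
          nsmul_eq_mul]
        field_simp

end SampleMean

section SampleMeanEuclidean

variable {Ω : Type*} [MeasurableSpace Ω] {μ : Measure Ω} [IsProbabilityMeasure μ]
  {ι : Type*} [Fintype ι]

lemma sum_variance_le_integral_norm_sub_sq {X : Ω → EuclideanSpace ℝ ι} (hX : MemLp X 2 μ)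
    (c : EuclideanSpace ℝ ι) :
    ∑ r, Var[fun ω => X ω r; μ] ≤ ∫ ω, ‖X ω - c‖ ^ 2 ∂μ := by
  have hXc : ∀ r, MemLp (fun ω => X ω r - c r) 2 μ := fun r => (hX.eval_piLp r).sub (memLp_const _)
  simp only [EuclideanSpace.real_norm_sq_eq, PiLp.sub_apply]
  rw [integral_finsetSum _ fun r _ => (hXc r).integrable_sq]
  refine Finset.sum_le_sum fun r _ => ?_
  rw [← variance_sub_const (hX.eval_piLp r).aestronglyMeasurable (c r)]
  exact variance_le_expectation_sq (hXc r).aestronglyMeasurable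

theorem integral_norm_smul_sum_sub_le {β : Type*} [MeasurableSpace β] {n : ℕ} (i₀ : Fin n)
    {Y : Fin n → Ω → β} (hind : iIndepFun Y μ) (hid : ∀ i j, IdentDistrib (Y i) (Y j) μ μ)
    {g : β → EuclideanSpace ℝ ι} (hg : Measurable g) (hg₂ : MemLp (fun ω => g (Y i₀ ω)) 2 μ)
    {m : EuclideanSpace ℝ ι} (hm : ∀ r, ∫ ω, g (Y i₀ ω) r ∂μ = m r) (c : EuclideanSpace ℝ ι) :
    Integrable (fun ω => ‖(n : ℝ)⁻¹ • ∑ i, g (Y i ω) - m‖) μ ∧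
      ∫ ω, ‖(n : ℝ)⁻¹ • ∑ i, g (Y i ω) - m‖ ∂μ ≤ √((∫ ω, ‖g (Y i₀ ω) - c‖ ^ 2 ∂μ) / n) := by
  have hX : ∀ i, MemLp (fun ω => g (Y i ω)) 2 μ := by
    intro i
    have hgY : IdentDistrib (fun ω => g (Y i ω)) (fun ω => g (Y i₀ ω)) μ μ := (hid i i₀).comp hg
    exact hgY.memLp_iff.mpr hg₂
  have hS : MemLp (fun ω => ∑ i, g (Y i ω)) 2 μ := memLp_finsetSum _ fun i _ => hX i
  have hZ : MemLp (fun ω => (n : ℝ)⁻¹ • ∑ i, g (Y i ω) - m) 2 μ :=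
    (hS.const_smul ((n : ℝ)⁻¹)).sub (memLp_const m)
  refine ⟨hZ.norm.integrable one_le_two, (integral_le_sqrt_integral_sq hZ.norm).trans ?_⟩
  refine Real.sqrt_le_sqrt ?_
  have hgr : ∀ r, Measurable fun y => g y r := fun r =>
    (measurable_pi_apply r).comp ((WithLp.measurable_ofLp 2 _).comp hg)
  have hcoord : ∀ r, ∫ ω, ((n : ℝ)⁻¹ * ∑ i, g (Y i ω) r - m r) ^ 2 ∂μ
      = Var[fun ω => g (Y i₀ ω) r; μ] / n := fun r =>
    integral_sq_smul_sum_sub i₀ (fun i => (hX i).eval_piLp r)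
      (fun i j hij => (hind.indepFun hij).comp (hgr r) (hgr r))
      (fun i => (hid i i₀).comp (hgr r)) (hm r)
  calc ∫ ω, ‖(n : ℝ)⁻¹ • ∑ i, g (Y i ω) - m‖ ^ 2 ∂μ
      = ∑ r, ∫ ω, ((n : ℝ)⁻¹ • ∑ i, g (Y i ω) - m) r ^ 2 ∂μ := by
        simp only [EuclideanSpace.real_norm_sq_eq]
        exact integral_finsetSum _ fun r _ => (hZ.eval_piLp r).integrable_sq
    _ = (∑ r, Var[fun ω => g (Y i₀ ω) r; μ]) / n := by
        rw [Finset.sum_div]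
        refine Finset.sum_congr rfl fun r _ => ?_
        simpa only [PiLp.sub_apply, PiLp.smul_apply, WithLp.ofLp_sum, Finset.sum_apply,
          smul_eq_mul] using hcoord r
    _ ≤ (∫ ω, ‖g (Y i₀ ω) - c‖ ^ 2 ∂μ) / n :=
        div_le_div_of_nonneg_right (sum_variance_le_integral_norm_sub_sq hg₂ c) (Nat.cast_nonneg n)

end SampleMeanEuclidean

section SampleRoot

variable {p : ℕ} {Ω : Type*} [MeasurableSpace Ω] {μ : Measure Ω}

lemma posSemidef_mExp {F : Ω → Matrix (Fin p) (Fin p) ℝ} (hF : ∀ ω, (F ω).PosSemidef)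
    (hint : ∀ i j, Integrable (fun ω => F ω i j) μ) : (mExp μ F).PosSemidef := by
  have hquad : ∀ (x : Fin p → ℝ) (M : Matrix (Fin p) (Fin p) ℝ),
      star x ⬝ᵥ M *ᵥ x = ∑ i, ∑ j, x i * x j * M i j := by
    intro x M
    simp only [dotProduct, mulVec, Finset.mul_sum, star_trivial]
    exact Finset.sum_congr rfl fun i _ => Finset.sum_congr rfl fun j _ => by ring
  rw [posSemidef_iff_dotProduct_mulVec]
  refine ⟨?_, fun x => ?_⟩
  · ext i j
    simp only [mExp, conjTranspose_apply, of_apply, star_trivial]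
    exact integral_congr_ae (ae_of_all _ fun ω => ((hF ω).1.apply i j))
  · have hint' : ∀ i j, Integrable (fun ω => x i * x j * F ω i j) μ :=
      fun i j => (hint i j).const_mul _
    calc 0 ≤ ∫ ω, star x ⬝ᵥ F ω *ᵥ x ∂μ :=
          integral_nonneg fun ω => (hF ω).dotProduct_mulVec_nonneg x
      _ = star x ⬝ᵥ mExp μ F *ᵥ x := by
          simp only [hquad, mExp, of_apply]
          rw [integral_finsetSum _ fun i _ => integrable_finsetSum _ fun j _ => hint' i j]
          refine Finset.sum_congr rfl fun i _ => ?_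
          rw [integral_finsetSum _ fun j _ => hint' i j]
          simp only [integral_const_mul]

lemma posSemidef_mExp_msqrt_vecMulVec_self {X : Ω → Fin p → ℝ} (hX : AEMeasurable X μ)
    (hint : Integrable (fun ω => eunorm (X ω)) μ) :
    (mExp μ fun ω => msqrt (vecMulVec (X ω) (X ω))).PosSemidef :=
  posSemidef_mExp (fun ω => posSemidef_msqrt_vecMulVec_self _) fun i j =>
    hint.mono' ((measurable_msqrt_vecMulVec_self_apply i j).comp_aemeasurable hX).aestronglyMeasurable
      (ae_of_all _ fun ω => by
        rw [Real.norm_eq_abs, ← frob_msqrt_vecMulVec_self]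
        exact abs_apply_le_frob _ i j)

lemma memLp_toLp_of_integrable_eunorm_sq {X : Ω → Fin p → ℝ} (hX : AEMeasurable X μ)
    (h : Integrable (fun ω => eunorm (X ω) ^ 2) μ) : MemLp (fun ω => WithLp.toLp 2 (X ω)) 2 μ :=
  (memLp_two_iff_integrable_sq_norm (f := fun ω => WithLp.toLp 2 (X ω))
    ((WithLp.measurable_toLp 2 _).comp_aemeasurable hX).aestronglyMeasurable).mpr
    (by simpa only [eunorm_eq_norm] using h)

variable [IsProbabilityMeasure μ] {n : ℕ}

lemma integrable_eunorm_sub {X : Ω → Fin p → ℝ} (hX : AEMeasurable X μ)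
    (h : Integrable (fun ω => eunorm (X ω) ^ 2) μ) (c : Fin p → ℝ) :
    Integrable (fun ω => eunorm (X ω - c)) μ := by
  simpa only [eunorm_eq_norm, WithLp.toLp_sub, Pi.sub_apply] using
    ((memLp_toLp_of_integrable_eunorm_sq hX h).sub (memLp_const _)).norm.integrable one_le_two

lemma integral_eunorm_smul_sum_sub_le (i₀ : Fin n) {Y : Fin n → Ω → Fin p → ℝ}
    (hind : iIndepFun Y μ) (hid : ∀ i j, IdentDistrib (Y i) (Y j) μ μ)
    (hY₂ : Integrable (fun ω => eunorm (Y i₀ ω) ^ 2) μ) {m : Fin p → ℝ}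
    (hm : ∀ r, ∫ ω, Y i₀ ω r ∂μ = m r) :
    Integrable (fun ω => eunorm ((n : ℝ)⁻¹ • ∑ i, Y i ω - m)) μ ∧
      ∫ ω, eunorm ((n : ℝ)⁻¹ • ∑ i, Y i ω - m) ∂μ
        ≤ √((∫ ω, eunorm (Y i₀ ω - m) ^ 2 ∂μ) / n) := by
  simpa only [eunorm_eq_norm, WithLp.toLp_sub, WithLp.toLp_smul, WithLp.toLp_sum] using
    integral_norm_smul_sum_sub_le i₀ hind hid (WithLp.measurable_toLp 2 _)
      (memLp_toLp_of_integrable_eunorm_sq (hid i₀ i₀).aemeasurable_fst hY₂)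
      (m := WithLp.toLp 2 m) hm (WithLp.toLp 2 m)

lemma integral_frob_smul_sum_msqrt_sub_le (i₀ : Fin n) {Y : Fin n → Ω → Fin p → ℝ}
    (hind : iIndepFun Y μ) (hid : ∀ i j, IdentDistrib (Y i) (Y j) μ μ)
    (hY₂ : Integrable (fun ω => eunorm (Y i₀ ω) ^ 2) μ) (m : Fin p → ℝ) :
    Integrable (fun ω => frob ((n : ℝ)⁻¹ • ∑ i, msqrt (vecMulVec (Y i ω - m) (Y i ω - m))
      - mExp μ fun ω => msqrt (vecMulVec (Y i₀ ω - m) (Y i₀ ω - m)))) μ ∧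
      ∫ ω, frob ((n : ℝ)⁻¹ • ∑ i, msqrt (vecMulVec (Y i ω - m) (Y i ω - m))
        - mExp μ fun ω => msqrt (vecMulVec (Y i₀ ω - m) (Y i₀ ω - m))) ∂μ
        ≤ √((∫ ω, eunorm (Y i₀ ω - m) ^ 2 ∂μ) / n) := by
  set g : (Fin p → ℝ) → EuclideanSpace ℝ (Fin p × Fin p) :=
    fun v => WithLp.toLp 2 (msqrt (vecMulVec (v - m) (v - m))).vec
  -- `M.vec (j, i) = M i j`
  have hg : Measurable g := (WithLp.measurable_toLp 2 _).comp <| measurable_pi_lambda _ fun q =>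
    (measurable_msqrt_vecMulVec_self_apply q.2 q.1).comp (measurable_id.sub_const m)
  have hnorm : ∀ v, ‖g v‖ = eunorm (v - m) := fun v => by
    rw [← frob_eq_norm, frob_msqrt_vecMulVec_self]
  have hg₂ : MemLp (fun ω => g (Y i₀ ω)) 2 μ := by
    refine ((memLp_toLp_of_integrable_eunorm_sq (hid i₀ i₀).aemeasurable_fst hY₂).sub
      (memLp_const (WithLp.toLp 2 m))).of_le
      (hg.comp_aemeasurable (hid i₀ i₀).aemeasurable_fst).aestronglyMeasurable
      (ae_of_all _ fun ω => ?_)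
    rw [hnorm, eunorm_eq_norm, WithLp.toLp_sub]
    exact le_rfl
  obtain ⟨hint, hle⟩ := integral_norm_smul_sum_sub_le i₀ hind hid hg hg₂
    (m := WithLp.toLp 2 (mExp μ fun ω => msqrt (vecMulVec (Y i₀ ω - m) (Y i₀ ω - m))).vec)
    (fun q => rfl) 0
  simp only [sub_zero, hnorm, g, ← WithLp.toLp_sum, ← WithLp.toLp_smul, ← WithLp.toLp_sub,
    ← vec_sum, ← vec_smul, ← vec_sub, ← frob_eq_norm] at hint hle
  exact ⟨hint, hle⟩

end SampleRoot

theorem stmt9_general (p : ℕ) :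
    ∃ κ : ℝ, 0 ≤ κ ∧
      ∀ (Ωs : Type) [MeasurableSpace Ωs] (μ : Measure Ωs) [IsProbabilityMeasure μ]
        (n : ℕ) (hn : 0 < n) (Y : Fin n → Ωs → Fin p → ℝ),
        (∀ i, Measurable (Y i)) →
        iIndepFun Y μ →
        (∀ i j, IdentDistrib (Y i) (Y j) μ μ) →
        Integrable (fun ω => eunorm (Y ⟨0, hn⟩ ω) ^ 2) μ →
        ∀ μv : Fin p → ℝ, μv = (fun r => ∫ ω, Y ⟨0, hn⟩ ω r ∂μ) →
        (∫ ω, dS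
            (((n : ℝ)⁻¹ • ∑ i, msqrt (vecMulVec
                (Y i ω - (n : ℝ)⁻¹ • ∑ j, Y j ω) (Y i ω - (n : ℝ)⁻¹ • ∑ j, Y j ω))) *
             ((n : ℝ)⁻¹ • ∑ i, msqrt (vecMulVec
                (Y i ω - (n : ℝ)⁻¹ • ∑ j, Y j ω) (Y i ω - (n : ℝ)⁻¹ • ∑ j, Y j ω))))
            (covDS μ (Y ⟨0, hn⟩)) ∂μ) ≤
          κ * Real.sqrt ((∫ ω, eunorm (Y ⟨0, hn⟩ ω - μv) ^ 2 ∂μ) / n) := by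
  refine ⟨4, by norm_num, fun Ωs _ μ _ n hn Y hY hind hid hY₂ μv hμv => ?_⟩
  set N := mExp μ fun ω => msqrt (vecMulVec (Y ⟨0, hn⟩ ω - μv) (Y ⟨0, hn⟩ ω - μv))
  have hcov : covDS μ (Y ⟨0, hn⟩) = N * N := by rw [covDS, ← hμv]
  have hN : N.PosSemidef := posSemidef_mExp_msqrt_vecMulVec_self
    ((hY _).sub_const μv).aemeasurable (integrable_eunorm_sub (hY _).aemeasurable hY₂ μv)
  obtain ⟨hmeanInt, hmean⟩ :=
    integral_eunorm_smul_sum_sub_le ⟨0, hn⟩ hind hid hY₂ (congrFun hμv.symm)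
  obtain ⟨hrootInt, hroot⟩ := integral_frob_smul_sum_msqrt_sub_le ⟨0, hn⟩ hind hid hY₂ μv
  rw [hcov]
  refine (integral_mono_of_nonneg (ae_of_all _ fun ω => Real.sqrt_nonneg _)
    ((hmeanInt.const_mul 3).add hrootInt) (ae_of_all _ fun ω => ?_)).trans ?_
  · show dS _ (N * N) ≤ 3 * _ + _
    have hsample := (posSemidef_sum Finset.univ fun i _ =>
      posSemidef_msqrt_vecMulVec_self (Y i ω - (n : ℝ)⁻¹ • ∑ j, Y j ω)).smul
      (inv_nonneg.mpr (Nat.cast_nonneg (α := ℝ) n))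
    rw [dS, msqrt_mul_self hsample, msqrt_mul_self hN]
    have hperturb := frob_smul_sum_msqrt_sub_le (fun i => Y i ω) ((n : ℝ)⁻¹ • ∑ j, Y j ω) μv
    refine (frob_sub_le_add _ ((n : ℝ)⁻¹ • ∑ i, msqrt (vecMulVec (Y i ω - μv) (Y i ω - μv)))
      N).trans ?_
    linarith
  · simp only [Pi.add_apply]
    rw [integral_add (hmeanInt.const_mul 3) hrootInt, integral_const_mul]
    linarith

/-- For each dimension `p ≥ 1` there exists a finite constant `κ_p` such that for
any i.i.d. sample `Y₁, …, Yₙ` of a random vector `Y ∈ ℝ^p` with mean `μ` and `E‖Y‖² < ∞`, the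
sample `d_S`-covariance `Ω̆` (computed with the sample mean `Ȳ`) satisfies
`E[d_S(Ω̆, cov_{d_S}(Y))] ≤ κ_p √(E‖Y − μ‖² / n)`. -/
theorem stmt9 (p : ℕ) (hp : 1 ≤ p) :
    ∃ κ : ℝ, 0 ≤ κ ∧
      ∀ (Ωs : Type) [MeasurableSpace Ωs] (μ : Measure Ωs) [IsProbabilityMeasure μ]
        (n : ℕ) (hn : 0 < n) (Y : Fin n → Ωs → Fin p → ℝ),
        (∀ i, Measurable (Y i)) →
        iIndepFun Y μ →
        (∀ i j, IdentDistrib (Y i) (Y j) μ μ) →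
        Integrable (fun ω => eunorm (Y ⟨0, hn⟩ ω) ^ 2) μ →
        ∀ μv : Fin p → ℝ, μv = (fun r => ∫ ω, Y ⟨0, hn⟩ ω r ∂μ) →
        (∫ ω, dS
            (((n : ℝ)⁻¹ • ∑ i, msqrt (vecMulVec
                (Y i ω - (n : ℝ)⁻¹ • ∑ j, Y j ω) (Y i ω - (n : ℝ)⁻¹ • ∑ j, Y j ω))) *
             ((n : ℝ)⁻¹ • ∑ i, msqrt (vecMulVec
                (Y i ω - (n : ℝ)⁻¹ • ∑ j, Y j ω) (Y i ω - (n : ℝ)⁻¹ • ∑ j, Y j ω))))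
            (covDS μ (Y ⟨0, hn⟩)) ∂μ) ≤
          κ * Real.sqrt ((∫ ω, eunorm (Y ⟨0, hn⟩ ω - μv) ^ 2 ∂μ) / n) :=
  stmt9_general p
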